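/- arXiv:2310.05466 — 7 statements merged into one kernel-verified Lean document; each statement's English description precedes it below -/
import Mathlib

section
/- Let g : ℝ_{>0} → ℝ, g(t) = ∑_{i=1}^{d} a_i t^{ν_i} be a univariate signomial with g(1) < 0. If the leading coefficient LC(g) is negative and the coefficient sign sequence of g has at most one sign change, then g(t) < 0 for all t ≥ 1. -/
/-- A univariate signomial `g(t) = ∑_{i<d} a i * t ^ ν i`. -/
noncomputable def usig (d : ℕ) (a ν : ℕ → ℝ) (t : ℝ) : ℝ :=
  ∑ i ∈ Finset.range d, a i * t ^ ν i

/-- Number of sign changes in the coefficient sequence `a 0, …, a (d-1)`. -/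
noncomputable def signChanges (d : ℕ) (a : ℕ → ℝ) : ℕ :=
  ((Finset.range (d - 1)).filter (fun i => a i * a (i + 1) < 0)).card

lemma exists_change (a : ℕ → ℝ) : ∀ j i, i < j → (∀ m, i ≤ m → m ≤ j → a m ≠ 0) →
    a i * a j < 0 → ∃ m, i ≤ m ∧ m < j ∧ a m * a (m + 1) < 0 := by
  intro j
  induction j with
  | zero => intro i h; omega
  | succ j ih =>
    intro i hij hne hprod
    rcases eq_or_lt_of_le (Nat.lt_succ_iff.mp hij) with heq | hlt
    · subst heq; exact ⟨i, le_refl _, hij, hprod⟩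
    · rcases lt_trichotomy (a i * a j) 0 with h | h | h
      · obtain ⟨m, h1, h2, h3⟩ := ih i hlt (fun m hm1 hm2 => hne m hm1 (by omega)) h
        exact ⟨m, h1, by omega, h3⟩
      · exact absurd h (mul_ne_zero (hne i le_rfl (by omega)) (hne j (by omega) (by omega)))
      · refine ⟨j, by omega, by omega, ?_⟩
        nlinarith [sq_nonneg (a i)]

/-- Lemma 2.3(i): if `g(1) < 0`, the leading coefficient is negative and the coefficient
sign sequence has at most one sign change, then `g(t) < 0` for all `t ≥ 1`. -/
theorem stmt_0 (d : ℕ) (hd : 0 < d) (a ν : ℕ → ℝ)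
    (ha : ∀ i ∈ Finset.range d, a i ≠ 0)
    (hν : ∀ i j : ℕ, i < j → j < d → ν i < ν j)
    (h1 : usig d a ν 1 < 0)
    (hLC : a (d - 1) < 0)
    (hsc : signChanges d a ≤ 1) :
    ∀ t : ℝ, 1 ≤ t → usig d a ν t < 0 := by
  classical
  intro t ht
  have ht0 : (0:ℝ) < t := lt_of_lt_of_le one_pos ht
  have hd1 : d - 1 < d := Nat.sub_lt hd one_pos
  have h40 : ∀ m, m < d → a m ≠ 0 := fun m hm => ha m (Finset.mem_range.mpr hm)
  have hex : ∃ i, i < d ∧ a i < 0 := ⟨d - 1, hd1, hLC⟩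
  set k := Nat.find hex with hk
  obtain ⟨hkd, hak⟩ := Nat.find_spec hex
  have hpos : ∀ i, i < k → 0 < a i := by
    intro i hi
    have h2 := Nat.find_min hex hi
    push_neg at h2
    have h3 := h40 i (by omega)
    rcases lt_or_gt_of_ne h3 with h | h
    · exact absurd h (not_lt.mpr (h2 (by omega)))
    · exact h
  have hneg : ∀ i, k ≤ i → i < d → a i < 0 := by
    intro i hki hid
    by_contra hcon
    have hai : 0 < a i := lt_of_le_of_ne (not_lt.mp hcon) (Ne.symm (h40 i hid))
    have hik : k < i := lt_of_le_of_ne hki (by rintro rfl; exact absurd hai (asymm hak))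
    have hid1 : i < d - 1 := by
      rcases lt_or_eq_of_le (Nat.le_sub_one_of_lt hid) with h | h
      · exact h
      · exact absurd (h ▸ hai) (asymm hLC)
    obtain ⟨m1, hm1a, hm1b, hm1c⟩ := exists_change a i k hik
      (fun m hm1 hm2 => h40 m (by omega)) (mul_neg_of_neg_of_pos hak hai)
    obtain ⟨m2, hm2a, hm2b, hm2c⟩ := exists_change a (d - 1) i hid1
      (fun m hm1 hm2 => h40 m (by omega)) (mul_neg_of_pos_of_neg hai hLC)
    have hsub : ({m1, m2} : Finset ℕ) ⊆
        (Finset.range (d - 1)).filter (fun i => a i * a (i + 1) < 0) := by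
      intro x hx
      simp only [Finset.mem_insert, Finset.mem_singleton] at hx
      rcases hx with rfl | rfl <;> simp only [Finset.mem_filter, Finset.mem_range]
      · exact ⟨by omega, hm1c⟩
      · exact ⟨by omega, hm2c⟩
    have hcard : 2 ≤ signChanges d a := by
      have := Finset.card_le_card hsub
      rwa [Finset.card_pair (by omega : m1 ≠ m2)] at this
    omega
  have key : ∀ i ∈ Finset.range d, a i * t ^ ν i ≤ a i * t ^ ν k := by
    intro i hi
    rw [Finset.mem_range] at hi
    rcases lt_trichotomy i k with h | h | h
    · exact mul_le_mul_of_nonneg_left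
        (Real.rpow_le_rpow_of_exponent_le ht (le_of_lt (hν i k h hkd))) (hpos i h).le
    · subst h; exact le_rfl
    · exact mul_le_mul_of_nonpos_left
        (Real.rpow_le_rpow_of_exponent_le ht (le_of_lt (hν k i h hi))) (hneg i h.le hi).le
  calc usig d a ν t ≤ ∑ i ∈ Finset.range d, a i * t ^ ν k := Finset.sum_le_sum key
    _ = (∑ i ∈ Finset.range d, a i) * t ^ ν k := by rw [← Finset.sum_mul]
    _ < 0 := by
        have he : (∑ i ∈ Finset.range d, a i) = usig d a ν 1 := by
          simp [usig, Real.one_rpow]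
        rw [he]
        exact mul_neg_of_neg_of_pos h1 (Real.rpow_pos_of_pos ht0 _)
end

section
/- Let g : ℝ_{>0} → ℝ, g(t) = ∑_{i=1}^{d} a_i t^{ν_i} be a univariate signomial with g(1) < 0. If the trailing coefficient SC(g) is negative and the coefficient sign sequence of g has at most one sign change, then g(t) < 0 for all 0 < t ≤ 1. -/
/-- If a i and a j have opposite signs with i < j and interior entries nonzero,
there is a sign flip between consecutive entries somewhere in [i, j). -/
lemma exists_flip (a : ℕ → ℝ) : ∀ (j i : ℕ), i < j →
    (∀ m, i < m → m < j → a m ≠ 0) → a i * a j < 0 →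
    ∃ m, i ≤ m ∧ m < j ∧ a m * a (m + 1) < 0 := by
  intro j
  induction j with
  | zero => omega
  | succ n ih =>
    intro i hij hnz h
    rcases eq_or_lt_of_le (Nat.lt_succ_iff.mp hij) with rfl | hin
    · exact ⟨i, le_rfl, Nat.lt_succ_self i, h⟩
    · by_cases hc : a i * a n < 0
      · obtain ⟨m, h1, h2, h3⟩ := ih i hin (fun m hm1 hm2 => hnz m hm1 (by omega)) hc
        exact ⟨m, h1, h2.trans (Nat.lt_succ_self n), h3⟩
      · push_neg at hc
        refine ⟨n, hin.le, Nat.lt_succ_self n, ?_⟩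
        have hn0 : a n ≠ 0 := hnz n hin (Nat.lt_succ_self n)
        have han2 : 0 < a n * a n := mul_self_pos.mpr hn0
        by_contra hg
        push_neg at hg
        have h1 : 0 ≤ (a i * a n) * (a n * a (n + 1)) := mul_nonneg hc hg
        have h2 : (a n * a n) * (a i * a (n + 1)) < 0 := mul_neg_of_pos_of_neg han2 h
        nlinarith [h1, h2]

/-- Lemma 2.3(ii): if `g(1) < 0`, the trailing coefficient is negative and the coefficient
sign sequence has at most one sign change, then `g(t) < 0` for all `0 < t ≤ 1`. -/
theorem stmt_1 (d : ℕ) (hd : 0 < d) (a ν : ℕ → ℝ)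
    (ha : ∀ i ∈ Finset.range d, a i ≠ 0)
    (hν : ∀ i j : ℕ, i < j → j < d → ν i < ν j)
    (h1 : usig d a ν 1 < 0)
    (hSC : a 0 < 0)
    (hsc : signChanges d a ≤ 1) :
    ∀ t : ℝ, 0 < t → t ≤ 1 → usig d a ν t < 0 := by
  have ha' : ∀ i, i < d → a i ≠ 0 := fun i hi => ha i (Finset.mem_range.mpr hi)
  -- once positive, stays positive
  have hpers : ∀ i j, i < j → j < d → 0 < a i → 0 < a j := by
    intro i j hij hjd hai
    by_contra hj
    push_neg at hj
    have haj : a j < 0 := lt_of_le_of_ne hj (ha' j hjd)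
    have hi0 : 0 < i := by
      rcases Nat.eq_zero_or_pos i with rfl | h
      · linarith
      · exact h
    obtain ⟨m1, hm1a, hm1b, hm1c⟩ := exists_flip a i 0 hi0
      (fun m _ hm2 => ha' m (by omega)) (mul_neg_of_neg_of_pos hSC hai)
    obtain ⟨m2, hm2a, hm2b, hm2c⟩ := exists_flip a j i hij
      (fun m _ hm2 => ha' m (by omega)) (mul_neg_of_pos_of_neg hai haj)
    have hcard : 1 < signChanges d a := by
      rw [signChanges, Finset.one_lt_card]
      refine ⟨m1, ?_, m2, ?_, by omega⟩
      · simp only [Finset.mem_filter, Finset.mem_range]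
        exact ⟨by omega, hm1c⟩
      · simp only [Finset.mem_filter, Finset.mem_range]
        exact ⟨by omega, hm2c⟩
    omega
  intro t ht ht1
  by_cases hpos : ∃ i, i < d ∧ 0 < a i
  · set k := Nat.find hpos with hk
    obtain ⟨hkd, hak⟩ := Nat.find_spec hpos
    have hterm : ∀ i ∈ Finset.range d, a i * t ^ ν i ≤ a i * t ^ ν k := by
      intro i hi
      rw [Finset.mem_range] at hi
      rcases lt_trichotomy i k with hik | rfl | hki
      · have hai : a i < 0 := by
          have := Nat.find_min hpos hik
          push_neg at this
          exact lt_of_le_of_ne (this hi) (ha' i hi)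
        have hexp : ν i < ν k := hν i k hik hkd
        have : t ^ ν k ≤ t ^ ν i :=
          Real.rpow_le_rpow_of_exponent_ge ht ht1 hexp.le
        exact mul_le_mul_of_nonpos_left this hai.le
      · exact le_rfl
      · have hai : 0 < a i := hpers k i hki hi hak
        have hexp : ν k < ν i := hν k i hki hi
        have : t ^ ν i ≤ t ^ ν k :=
          Real.rpow_le_rpow_of_exponent_ge ht ht1 hexp.le
        exact mul_le_mul_of_nonneg_left this hai.le
    have hsum : usig d a ν t ≤ ∑ i ∈ Finset.range d, a i * t ^ ν k :=
      Finset.sum_le_sum hterm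
    have heq : ∑ i ∈ Finset.range d, a i * t ^ ν k
        = t ^ ν k * usig d a ν 1 := by
      rw [usig, Finset.mul_sum]
      refine Finset.sum_congr rfl fun i _ => ?_
      rw [Real.one_rpow]
      ring
    have hpow : (0:ℝ) < t ^ ν k := Real.rpow_pos_of_pos ht _
    calc usig d a ν t ≤ t ^ ν k * usig d a ν 1 := heq ▸ hsum
      _ < 0 := mul_neg_of_pos_of_neg hpow h1
  · push_neg at hpos
    have : ∀ i ∈ Finset.range d, a i * t ^ ν i < 0 := by
      intro i hi
      rw [Finset.mem_range] at hi
      have hai : a i < 0 := lt_of_le_of_ne (hpos i hi) (ha' i hi)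
      exact mul_neg_of_neg_of_pos hai (Real.rpow_pos_of_pos ht _)
    exact Finset.sum_neg this (Finset.nonempty_range_iff.mpr hd.ne')
end

section
/- Let g : ℝ_{>0} → ℝ, g(t) = ∑_{i=1}^{d} a_i t^{ν_i} be a univariate signomial with g(1) < 0. If the coefficient sign sequence of g has at most two sign changes and LC(g) < 0 or SC(g) < 0, then either g(t) < 0 for all 0 < t ≤ 1, or g(t) < 0 for all t ≥ 1. -/
open Finset Filter Real Topology

noncomputable def expSum (d : ℕ) (a ν : ℕ → ℝ) (s : ℝ) : ℝ :=
  ∑ i ∈ range d, a i * exp (ν i * s)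

lemma usig_eq_expSum_log (d : ℕ) (a ν : ℕ → ℝ) {t : ℝ} (ht : 0 < t) :
    usig d a ν t = expSum d a ν (log t) := by
  refine sum_congr rfl fun i _ => ?_
  rw [rpow_def_of_pos ht, mul_comm (log t)]

section ExpSum

variable {d : ℕ} {a ν : ℕ → ℝ}

lemma hasDerivAt_expSum (s : ℝ) :
    HasDerivAt (expSum d a ν) (expSum d (fun i => a i * ν i) ν s) s := by
  refine HasDerivAt.fun_sum fun i _ => ?_
  exact ((((hasDerivAt_id' s).const_mul (ν i)).exp).const_mul (a i)).congr_deriv (by ring)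

lemma continuous_expSum : Continuous (expSum d a ν) :=
  continuous_iff_continuousAt.2 fun s => hasDerivAt_expSum (a := a) (ν := ν) s |>.continuousAt

lemma expSum_sub_const (c s : ℝ) :
    expSum d a (fun i => ν i - c) s = exp (-(c * s)) * expSum d a ν s := by
  rw [expSum, expSum, mul_sum]
  refine sum_congr rfl fun i _ => ?_
  rw [show (ν i - c) * s = ν i * s + -(c * s) by ring, exp_add]
  ring

lemma expSum_neg_exponents (s : ℝ) :
    expSum d a (fun i => -ν i) s = expSum d a ν (-s) := by
  simp only [expSum, neg_mul, mul_neg]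

lemma expSum_add_single {k : ℕ} (hk : k < d) (ε s : ℝ) :
    expSum d (a + Pi.single k ε : ℕ → ℝ) ν s = expSum d a ν s + ε * exp (ν k * s) := by
  have hsingle : ∑ i ∈ range d, (Pi.single k ε : ℕ → ℝ) i * exp (ν i * s) = ε * exp (ν k * s) := by
    rw [sum_eq_single_of_mem k (mem_range.2 hk) fun i _ hik => by simp [hik]]
    simp
  simp only [expSum, Pi.add_apply, add_mul, sum_add_distrib, hsingle]

lemma tendsto_exp_mul_expSum_atTop {k : ℕ} (hk : k < d) (hdom : ∀ i < d, i ≠ k → ν i < ν k) :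
    Tendsto (fun s => exp (-(ν k * s)) * expSum d a ν s) atTop (𝓝 (a k)) := by
  simp only [← expSum_sub_const]
  have hterm : ∀ i ∈ range d, Tendsto (fun s => a i * exp ((ν i - ν k) * s)) atTop
      (𝓝 (if k = i then a i else 0)) := by
    intro i hi
    split_ifs with hik
    · subst hik
      simp
    · have hneg : ν i - ν k < 0 := sub_neg.2 (hdom i (mem_range.1 hi) (Ne.symm hik))
      simpa using (tendsto_exp_atBot.comp
        ((tendsto_const_mul_atBot_of_neg hneg).2 tendsto_id)).const_mul (a i)
  simpa [expSum, sum_ite_eq, mem_range.2 hk] using tendsto_finsetSum _ hterm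

lemma eventually_expSum_neg_atTop {k : ℕ} (hk : k < d) (hdom : ∀ i < d, i ≠ k → ν i < ν k)
    (hak : a k < 0) : ∀ᶠ s in atTop, expSum d a ν s < 0 := by
  filter_upwards [(tendsto_exp_mul_expSum_atTop hk hdom).eventually_lt_const hak] with s hs
  exact neg_of_mul_neg_right hs (exp_pos _).le

lemma eventually_expSum_neg_atBot {k : ℕ} (hk : k < d) (hdom : ∀ i < d, i ≠ k → ν k < ν i)
    (hak : a k < 0) : ∀ᶠ s in atBot, expSum d a ν s < 0 := by
  have := tendsto_neg_atBot_atTop.eventually (eventually_expSum_neg_atTop (ν := fun i => -ν i)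
    hk (fun i hi hik => neg_lt_neg (hdom i hi hik)) hak)
  simpa only [expSum_neg_exponents, neg_neg] using this

end ExpSum

section SignChanges

variable {d : ℕ} {a : ℕ → ℝ}

lemma mul_pos_of_signChanges_eq_zero (ha : ∀ i < d, a i ≠ 0) (h : signChanges d a = 0) :
    ∀ i < d, 0 < a 0 * a i := by
  have hnone : ∀ i, i + 1 < d → 0 ≤ a i * a (i + 1) := by
    intro i hi
    by_contra! hneg
    have : i ∈ (range (d - 1)).filter (fun i => a i * a (i + 1) < 0) :=
      mem_filter.2 ⟨mem_range.2 (by omega), hneg⟩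
    rw [signChanges, card_eq_zero] at h
    simp [h] at this
  intro i hi
  induction i with
  | zero => exact mul_self_pos.2 (ha 0 hi)
  | succ i ih =>
    have hprev := ih (by omega)
    have hstep : 0 < a i * a (i + 1) :=
      (hnone i hi).lt_of_ne (mul_ne_zero (ha i (by omega)) (ha (i + 1) hi)).symm
    nlinarith [mul_self_pos.2 (ha i (by omega))]

lemma signChanges_congr_of_mul_pos {b : ℕ → ℝ} (h : ∀ i < d, 0 < a i * b i) :
    signChanges d a = signChanges d b := by
  refine congrArg card (filter_congr fun i hi => ?_)
  have hi := mem_range.1 hi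
  have hprod : 0 < (a i * a (i + 1)) * (b i * b (i + 1)) := by
    have := mul_pos (h i (by omega)) (h (i + 1) (by omega))
    linarith [show (a i * a (i + 1)) * (b i * b (i + 1)) = (a i * b i) * (a (i + 1) * b (i + 1))
      by ring]
  constructor <;> intro hneg <;> nlinarith

lemma signChanges_mul_add_one {f : ℕ → ℝ} {p : ℕ} (hp : p + 1 < d)
    (hap : a p * a (p + 1) < 0) (hneg : ∀ i ≤ p, f i < 0) (hpos : ∀ i, p < i → i < d → 0 < f i) :
    signChanges d (fun i => a i * f i) + 1 = signChanges d a := by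
  have hfilter : (range (d - 1)).filter (fun i => a i * f i * (a (i + 1) * f (i + 1)) < 0) =
      ((range (d - 1)).filter (fun i => a i * a (i + 1) < 0)).erase p := by
    ext i
    simp only [mem_filter, mem_erase]
    have hprod : a i * f i * (a (i + 1) * f (i + 1)) = (a i * a (i + 1)) * (f i * f (i + 1)) := by
      ring
    rw [hprod]
    by_cases hip : i = p
    · subst hip
      have := mul_neg_of_neg_of_pos (hneg i le_rfl) (hpos (i + 1) (by omega) hp)
      simp only [ne_eq, not_true_eq_false, false_and, iff_false, not_and, not_lt]
      exact fun _ => (mul_pos_of_neg_of_neg hap this).le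
    simp only [hip, ne_eq, not_false_eq_true, true_and]
    refine and_congr_right fun hi => ?_
    have hf : 0 < f i * f (i + 1) := by
      rcases lt_or_gt_of_ne hip with hip | hip
      · exact mul_pos_of_neg_of_neg (hneg i hip.le) (hneg (i + 1) hip)
      · have hi := mem_range.1 hi
        exact mul_pos (hpos i hip (by omega)) (hpos (i + 1) (by omega) (by omega))
    exact ⟨fun h => neg_of_mul_neg_left h hf.le, fun h => mul_neg_of_neg_of_pos h hf⟩
  rw [signChanges, signChanges, hfilter, card_erase_add_one]
  exact mem_filter.2 ⟨mem_range.2 (by omega), hap⟩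

end SignChanges

lemma exists_finset_deriv_eq_zero_card_le {f f' : ℝ → ℝ} (hf : ∀ x, HasDerivAt f (f' x) x)
    (S : Finset ℝ) (hS : ∀ x ∈ S, f x = 0) :
    ∃ T : Finset ℝ, (∀ y ∈ T, f' y = 0) ∧ S.card ≤ T.card + 1 := by
  set P := (S ×ˢ S).filter (fun q => q.1 < q.2)
  have hrolle : ∀ q ∈ P, ∃ w ∈ Set.Ioo q.1 q.2, f' w = 0 := by
    intro q hq
    obtain ⟨hqS, hlt⟩ := mem_filter.1 hq
    obtain ⟨h1, h2⟩ := mem_product.1 hqS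
    exact exists_hasDerivAt_eq_zero hlt
      (fun x _ => (hf x).continuousAt.continuousWithinAt) ((hS _ h1).trans (hS _ h2).symm)
      fun x _ => hf x
  choose! w hw using hrolle
  refine ⟨P.image w, forall_mem_image.2 fun q hq => (hw q hq).2, card_le_of_interleaved ?_⟩
  intro x hx y hy hxy _
  have hq : (x, y) ∈ P := mem_filter.2 ⟨mem_product.2 ⟨hx, hy⟩, hxy⟩
  exact ⟨w (x, y), mem_image_of_mem w hq, (hw _ hq).1⟩

/-- Descartes' rule of signs for exponential sums, counting distinct zeros. -/
theorem card_le_signChanges_of_expSum_eq_zero {d : ℕ} (hd : 0 < d) {a ν : ℕ → ℝ}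
    (ha : ∀ i < d, a i ≠ 0) (hν : StrictMonoOn ν (Set.Iio d)) {S : Finset ℝ}
    (hS : ∀ s ∈ S, expSum d a ν s = 0) : S.card ≤ signChanges d a := by
  obtain ⟨n, hn⟩ : ∃ n, signChanges d a = n := ⟨_, rfl⟩
  rw [hn]
  induction n generalizing a ν S with
  | zero =>
    suffices S = ∅ by simp [this]
    refine eq_empty_of_forall_notMem fun s hs => ?_
    have hsame := mul_pos_of_signChanges_eq_zero ha hn
    have hpos : 0 < a 0 * expSum d a ν s := by
      rw [expSum, mul_sum]
      refine sum_pos (fun i hi => ?_) ⟨0, mem_range.2 hd⟩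
      rw [← mul_assoc]
      exact mul_pos (hsame i (mem_range.1 hi)) (exp_pos _)
    simp [hS s hs] at hpos
  | succ n ih =>
    obtain ⟨p, hp⟩ := card_pos.1 (show 0 < signChanges d a by omega)
    obtain ⟨hp, hap⟩ := mem_filter.1 hp
    rw [mem_range] at hp
    replace hp : p + 1 < d := by omega
    set c := (ν p + ν (p + 1)) / 2 with hc
    have hνp : ν p < ν (p + 1) := hν (show p < d by omega) hp (by omega)
    have hneg : ∀ i ≤ p, ν i - c < 0 := fun i hi => by
      have := hν.monotoneOn (show i < d by omega) (show p < d by omega) hi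
      linarith
    have hpos : ∀ i, p < i → i < d → 0 < ν i - c := fun i hi hid => by
      have := hν.monotoneOn (show p + 1 < d from hp) hid hi
      linarith
    obtain ⟨T, hT, hST⟩ := exists_finset_deriv_eq_zero_card_le
      (hasDerivAt_expSum (a := a) (ν := fun i => ν i - c)) S
      fun s hs => by rw [expSum_sub_const, hS s hs, mul_zero]
    have hsc := signChanges_mul_add_one hp hap hneg hpos
    have hb : ∀ i < d, a i * (ν i - c) ≠ 0 := fun i hi => by
      refine mul_ne_zero (ha i hi) ?_
      rcases le_or_gt i p with hip | hip
      · exact (hneg i hip).ne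
      · exact (hpos i hip hi).ne'
    have := ih hb (fun i hi j hj hij => sub_lt_sub_right (hν hi hj hij) c) hT (by omega)
    omega

lemma exists_mem_Ioo_eq_zero_of_mul_neg {f : ℝ → ℝ} (hf : Continuous f) {x y : ℝ} (hxy : x < y)
    (h : f x * f y < 0) : ∃ z ∈ Set.Ioo x y, f z = 0 := by
  rcases mul_neg_iff.1 h with ⟨hx, hy⟩ | ⟨hx, hy⟩
  · exact intermediate_value_Ioo' hxy.le hf.continuousOn ⟨hy, hx⟩
  · exact intermediate_value_Ioo hxy.le hf.continuousOn ⟨hx, hy⟩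

lemma three_le_signChanges_of_alternating {d : ℕ} (hd : 0 < d) {a ν : ℕ → ℝ}
    (ha : ∀ i < d, a i ≠ 0) (hν : StrictMonoOn ν (Set.Iio d)) {s₀ s₁ s₂ s₃ : ℝ}
    (h₀₁ : s₀ < s₁) (h₁₂ : s₁ < s₂) (h₂₃ : s₂ < s₃)
    (hF₀₁ : expSum d a ν s₀ * expSum d a ν s₁ < 0) (hF₁₂ : expSum d a ν s₁ * expSum d a ν s₂ < 0)
    (hF₂₃ : expSum d a ν s₂ * expSum d a ν s₃ < 0) : 3 ≤ signChanges d a := by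
  obtain ⟨z₀, hz₀, hF₀⟩ := exists_mem_Ioo_eq_zero_of_mul_neg continuous_expSum h₀₁ hF₀₁
  obtain ⟨z₁, hz₁, hF₁⟩ := exists_mem_Ioo_eq_zero_of_mul_neg continuous_expSum h₁₂ hF₁₂
  obtain ⟨z₂, hz₂, hF₂⟩ := exists_mem_Ioo_eq_zero_of_mul_neg continuous_expSum h₂₃ hF₂₃
  have hcard : ({z₀, z₁, z₂} : Finset ℝ).card = 3 :=
    card_eq_three.2 ⟨z₀, z₁, z₂, (hz₀.2.trans hz₁.1).ne, (hz₀.2.trans (h₁₂.trans hz₂.1)).ne,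
      (hz₁.2.trans hz₂.1).ne, rfl⟩
  rw [← hcard]
  refine card_le_signChanges_of_expSum_eq_zero hd ha hν ?_
  simp [hF₀, hF₁, hF₂]

lemma exists_perturbation_expSum {d k : ℕ} (hk : k < d) {a ν : ℕ → ℝ} (ha : ∀ i < d, a i ≠ 0)
    (hak : a k < 0) {x : ℝ} (hx : expSum d a ν x < 0) :
    ∃ b : ℕ → ℝ, (∀ i < d, 0 < a i * b i) ∧ b k < 0 ∧ expSum d b ν x < 0 ∧
      ∀ s, expSum d a ν s < expSum d b ν s := by
  set ε := min (-a k) (-expSum d a ν x / exp (ν k * x)) / 2 with hε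
  have hε_pos : 0 < ε :=
    half_pos (lt_min (neg_pos.2 hak) (div_pos (neg_pos.2 hx) (exp_pos (ν k * x))))
  have hε_ak : ε < -a k := by
    have := min_le_left (-a k) (-expSum d a ν x / exp (ν k * x))
    linarith
  have hε_x : ε * exp (ν k * x) < -expSum d a ν x := by
    have := min_le_right (-a k) (-expSum d a ν x / exp (ν k * x))
    rw [← lt_div_iff₀ (exp_pos _)]
    linarith [div_pos (neg_pos.2 hx) (exp_pos (ν k * x))]
  refine ⟨a + Pi.single k ε, fun i hi => ?_, ?_, ?_, fun s => ?_⟩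
  · by_cases hik : i = k
    · subst hik
      simp only [Pi.add_apply, Pi.single_eq_same]
      exact mul_pos_of_neg_of_neg hak (by linarith)
    · simpa [hik] using ha i hi
  · simp only [Pi.add_apply, Pi.single_eq_same]
    linarith
  · rw [expSum_add_single hk]
    linarith
  · rw [expSum_add_single hk]
    linarith [mul_pos hε_pos (exp_pos (ν k * s))]

theorem three_le_signChanges_of_nonneg_neg_nonneg {d : ℕ} (hd : 0 < d) {a ν : ℕ → ℝ}
    (ha : ∀ i < d, a i ≠ 0) (hν : StrictMonoOn ν (Set.Iio d))
    (hLCSC : a (d - 1) < 0 ∨ a 0 < 0) {s₁ x s₃ : ℝ} (h₁ : s₁ < x) (h₃ : x < s₃)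
    (hF₁ : 0 ≤ expSum d a ν s₁) (hFx : expSum d a ν x < 0) (hF₃ : 0 ≤ expSum d a ν s₃) :
    3 ≤ signChanges d a := by
  have hperturb : ∀ k < d, a k < 0 → ∃ b : ℕ → ℝ, (∀ i < d, 0 < a i * b i) ∧ b k < 0 ∧
      0 < expSum d b ν s₁ ∧ expSum d b ν x < 0 ∧ 0 < expSum d b ν s₃ := by
    intro k hk hak
    obtain ⟨b, hab, hbk, hbx, hlt⟩ := exists_perturbation_expSum hk ha hak hFx
    exact ⟨b, hab, hbk, hF₁.trans_lt (hlt s₁), hbx, hF₃.trans_lt (hlt s₃)⟩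
  have hb_ne : ∀ b : ℕ → ℝ, (∀ i < d, 0 < a i * b i) → ∀ i < d, b i ≠ 0 :=
    fun b hab i hi hbi => by simpa [hbi] using hab i hi
  rcases hLCSC with hlast | hfirst
  · obtain ⟨b, hab, hbk, hb₁, hbx, hb₃⟩ := hperturb (d - 1) (by omega) hlast
    have hdom : ∀ i < d, i ≠ d - 1 → ν i < ν (d - 1) :=
      fun i hi hid => hν hi (show d - 1 < d by omega) (by omega)
    obtain ⟨s₄, hb₄, h₄⟩ := ((eventually_expSum_neg_atTop (show d - 1 < d by omega) hdom hbk).and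
      (eventually_gt_atTop s₃)).exists
    rw [signChanges_congr_of_mul_pos hab]
    exact three_le_signChanges_of_alternating hd (hb_ne b hab) hν h₁ h₃ h₄
      (mul_neg_of_pos_of_neg hb₁ hbx) (mul_neg_of_neg_of_pos hbx hb₃)
      (mul_neg_of_pos_of_neg hb₃ hb₄)
  · obtain ⟨b, hab, hbk, hb₁, hbx, hb₃⟩ := hperturb 0 hd hfirst
    have hdom : ∀ i < d, i ≠ 0 → ν 0 < ν i := fun i hi hi0 => hν hd hi (by omega)
    obtain ⟨s₀, hb₀, h₀⟩ := ((eventually_expSum_neg_atBot hd hdom hbk).and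
      (eventually_lt_atBot s₁)).exists
    rw [signChanges_congr_of_mul_pos hab]
    exact three_le_signChanges_of_alternating hd (hb_ne b hab) hν h₀ h₁ h₃
      (mul_neg_of_neg_of_pos hb₀ hb₁) (mul_neg_of_pos_of_neg hb₁ hbx)
      (mul_neg_of_neg_of_pos hbx hb₃)

/-- Lemma 2.3(iii): if `g(1) < 0`, the coefficient sign sequence has at most two sign
changes, and the leading or the trailing coefficient is negative, then `g(t) < 0` for all
`0 < t ≤ 1`, or `g(t) < 0` for all `t ≥ 1`. -/
theorem stmt_2 (d : ℕ) (hd : 0 < d) (a ν : ℕ → ℝ)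
    (ha : ∀ i ∈ Finset.range d, a i ≠ 0)
    (hν : ∀ i j : ℕ, i < j → j < d → ν i < ν j)
    (h1 : usig d a ν 1 < 0)
    (hLCSC : a (d - 1) < 0 ∨ a 0 < 0)
    (hsc : signChanges d a ≤ 2) :
    (∀ t : ℝ, 0 < t → t ≤ 1 → usig d a ν t < 0) ∨
    (∀ t : ℝ, 1 ≤ t → usig d a ν t < 0) := by
  by_contra! ⟨⟨u, hu, hu1, hgu⟩, ⟨v, hv1, hgv⟩⟩
  rw [usig_eq_expSum_log d a ν one_pos, log_one] at h1
  rw [usig_eq_expSum_log d a ν hu] at hgu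
  rw [usig_eq_expSum_log d a ν (one_pos.trans_le hv1)] at hgv
  have hlogu : log u < 0 := (log_nonpos hu.le hu1).lt_of_ne fun h => by linarith [h ▸ hgu]
  have hlogv : 0 < log v := (log_nonneg hv1).lt_of_ne' fun h => by linarith [h ▸ hgv]
  have := three_le_signChanges_of_nonneg_neg_nonneg hd (fun i hi => ha i (mem_range.2 hi))
    (fun i hi j hj hij => hν i j hij hj) hLCSC hlogu hlogv hgu h1 hgv
  omega
end

section
/- Let f : ℝ_{>0}^n → ℝ, f(x) = ∑_{μ ∈ σ(f)} c_μ x^μ be a signomial whose support has a separating hyperplane H_{v,a}, and let R ⊆ σ(f) be a subset with σ_-(f) ⊆ R and H_{v,a} ∩ σ_+(f) ⊆ R. Then the map sending a connected component U of f|_R^{-1}(ℝ_{<0}) to the connected component of f^{-1}(ℝ_{<0}) containing U ∩ f^{-1}(ℝ_{<0}) is a well-defined bijection between the set of connected components of f|_R^{-1}(ℝ_{<0}) and the set of connected components of f^{-1}(ℝ_{<0}); in particular, f|_R^{-1}(ℝ_{<0}) and f^{-1}(ℝ_{<0}) have the same number of connected components. -/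
open Finset

/-- The signomial `x ↦ ∑_{μ ∈ S} c μ * x^μ` (with real exponents, via `Real.rpow`). -/
noncomputable def sig {n : ℕ} (S : Finset (Fin n → ℝ)) (c : (Fin n → ℝ) → ℝ)
    (x : Fin n → ℝ) : ℝ :=
  ∑ μ ∈ S, c μ * ∏ i, x i ^ μ i

open Classical in
/-- The restriction `f|_F` of the signomial to a subset `F ⊆ ℝⁿ` of exponent vectors. -/
noncomputable def sigOn {n : ℕ} (S : Finset (Fin n → ℝ)) (c : (Fin n → ℝ) → ℝ)
    (F : Set (Fin n → ℝ)) (x : Fin n → ℝ) : ℝ :=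
  ∑ μ ∈ S, if μ ∈ F then c μ * ∏ i, x i ^ μ i else 0

/-- `f⁻¹(ℝ_{<0})`: the points of the positive orthant where the signomial is negative. -/
def negSet {n : ℕ} (S : Finset (Fin n → ℝ)) (c : (Fin n → ℝ) → ℝ) : Set (Fin n → ℝ) :=
  {x | (∀ i, 0 < x i) ∧ sig S c x < 0}

/-- `(f|_F)⁻¹(ℝ_{<0})`. -/
def negSetOn {n : ℕ} (S : Finset (Fin n → ℝ)) (c : (Fin n → ℝ) → ℝ)
    (F : Set (Fin n → ℝ)) : Set (Fin n → ℝ) :=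
  {x | (∀ i, 0 < x i) ∧ sigOn S c F x < 0}

/-- `σ₊(f)`: the positive exponent vectors. -/
def sigPos' {n : ℕ} (S : Finset (Fin n → ℝ)) (c : (Fin n → ℝ) → ℝ) : Set (Fin n → ℝ) :=
  {μ | μ ∈ S ∧ 0 < c μ}

/-- `σ₋(f)`: the negative exponent vectors. -/
def sigNeg' {n : ℕ} (S : Finset (Fin n → ℝ)) (c : (Fin n → ℝ) → ℝ) : Set (Fin n → ℝ) :=
  {μ | μ ∈ S ∧ c μ < 0}

/-- The hyperplane `H_{v,a}`. -/
def Hyp {n : ℕ} (v : Fin n → ℝ) (a : ℝ) : Set (Fin n → ℝ) :=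
  {μ | ∑ i, v i * μ i = a}

/-- The closed half-space `H⁺_{v,a}`. -/
def Hplus {n : ℕ} (v : Fin n → ℝ) (a : ℝ) : Set (Fin n → ℝ) :=
  {μ | a ≤ ∑ i, v i * μ i}

/-- The closed half-space `H⁻_{v,a}`. -/
def Hminus {n : ℕ} (v : Fin n → ℝ) (a : ℝ) : Set (Fin n → ℝ) :=
  {μ | ∑ i, v i * μ i ≤ a}

/-- The open half-space `H^{+,∘}_{v,a}`. -/
def HplusO {n : ℕ} (v : Fin n → ℝ) (a : ℝ) : Set (Fin n → ℝ) :=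
  {μ | a < ∑ i, v i * μ i}

/-- The open half-space `H^{-,∘}_{v,a}`. -/
def HminusO {n : ℕ} (v : Fin n → ℝ) (a : ℝ) : Set (Fin n → ℝ) :=
  {μ | ∑ i, v i * μ i < a}

/-- `U` is a connected component of `X` (a maximal nonempty preconnected subset of `X`). -/
def IsConnComp {n : ℕ} (X U : Set (Fin n → ℝ)) : Prop :=
  U.Nonempty ∧ U ⊆ X ∧ IsPreconnected U ∧
    ∀ W, U ⊆ W → W ⊆ X → IsPreconnected W → W = U

/-- The number (cardinality) of connected components of `X`. -/
noncomputable def compCard {n : ℕ} (X : Set (Fin n → ℝ)) : Cardinal :=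
  Cardinal.mk {U : Set (Fin n → ℝ) // IsConnComp X U}

/-- The face `N(f)_v` of the Newton polytope of a signomial with support `S`,
with outer normal vector `v`. -/
def faceOf {n : ℕ} (S : Finset (Fin n → ℝ)) (v : Fin n → ℝ) : Set (Fin n → ℝ) :=
  {ω ∈ convexHull ℝ (↑S : Set (Fin n → ℝ)) |
    ∀ μ ∈ convexHull ℝ (↑S : Set (Fin n → ℝ)), ∑ i, v i * μ i ≤ ∑ i, v i * ω i}

/-!
Along the curves `t ↦ t^v ⊙ x` the signomial `f` becomes `t^a` times a signomial in `t` which,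
because of the separating hyperplane, is non-increasing for `t > 0`; hence `f⁻¹(ℝ_{<0})` and
`f|_R⁻¹(ℝ_{<0})` are invariant under the flow for `t ≥ 1`. The monomials of `σ(f) \ R` are
positive and lie strictly below the hyperplane, so `f⁻¹(ℝ_{<0}) ⊆ f|_R⁻¹(ℝ_{<0})`, and their
contribution dies out relative to `t^a`: far enough along the flow, every compact subset of
`f|_R⁻¹(ℝ_{<0})` lands in `f⁻¹(ℝ_{<0})`. So every component of `f|_R⁻¹(ℝ_{<0})` meets
`f⁻¹(ℝ_{<0})`, and two points of `f⁻¹(ℝ_{<0})` joined by a path in `f|_R⁻¹(ℝ_{<0})` are joined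
in `f⁻¹(ℝ_{<0})` too: flow both out, follow the pushed-out path, and flow back.
-/

open Filter Topology

section ConnectedComponents

variable {n : ℕ} {X Y U : Set (Fin n → ℝ)} {x : Fin n → ℝ}

lemma isConnComp_connectedComponentIn (hx : x ∈ X) : IsConnComp X (connectedComponentIn X x) :=
  ⟨⟨x, mem_connectedComponentIn hx⟩, connectedComponentIn_subset _ _,
    isPreconnected_connectedComponentIn, fun _ hUW hWX hW =>
      (hW.subset_connectedComponentIn (hUW (mem_connectedComponentIn hx)) hWX).antisymm hUW⟩

lemma IsConnComp.eq_connectedComponentIn (hU : IsConnComp X U) (hx : x ∈ U) :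
    U = connectedComponentIn X x :=
  (hU.2.2.2 _ (hU.2.2.1.subset_connectedComponentIn hx hU.2.1)
    (connectedComponentIn_subset _ _) isPreconnected_connectedComponentIn).symm

/-- `φ` is the inverse of the map sending a component of `Y` to the component of `X`
containing it. -/
theorem exists_bijective_isConnComp (hYX : Y ⊆ X)
    (hmeet : ∀ x ∈ X, ∃ y ∈ Y, y ∈ connectedComponentIn X x)
    (hmerge : ∀ x ∈ Y, ∀ y ∈ Y, y ∈ connectedComponentIn X x → y ∈ connectedComponentIn Y x) :
    ∃ φ : {U // IsConnComp X U} → {V // IsConnComp Y V},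
      (∀ U, U.1 ∩ Y ⊆ (φ U).1) ∧ Function.Bijective φ := by
  let ψ : {V // IsConnComp Y V} → {U // IsConnComp X U} := fun V =>
    ⟨connectedComponentIn X V.2.1.some,
      isConnComp_connectedComponentIn (hYX (V.2.2.1 V.2.1.some_mem))⟩
  have hψ : ∀ V : {V // IsConnComp Y V}, ∀ w ∈ V.1, (ψ V).1 = connectedComponentIn X w :=
    fun V w hw => connectedComponentIn_eq <|
      V.2.2.2.1.subset_connectedComponentIn V.2.1.some_mem (V.2.2.1.trans hYX) hw
  have hinj : Function.Injective ψ := by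
    intro V₁ V₂ h
    obtain ⟨x₁, hx₁⟩ := V₁.2.1
    obtain ⟨x₂, hx₂⟩ := V₂.2.1
    have hX : x₂ ∈ connectedComponentIn X x₁ := by
      rw [← hψ V₁ x₁ hx₁, h, hψ V₂ x₂ hx₂]
      exact mem_connectedComponentIn (hYX (V₂.2.2.1 hx₂))
    have hY := hmerge x₁ (V₁.2.2.1 hx₁) x₂ (V₂.2.2.1 hx₂) hX
    rw [← V₁.2.eq_connectedComponentIn hx₁] at hY
    exact Subtype.ext <| by
      rw [V₁.2.eq_connectedComponentIn hY, V₂.2.eq_connectedComponentIn hx₂]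
  have hsurj : Function.Surjective ψ := by
    intro U
    obtain ⟨x, hx⟩ := U.2.1
    obtain ⟨y, hy, hyx⟩ := hmeet x (U.2.2.1 hx)
    refine ⟨⟨_, isConnComp_connectedComponentIn hy⟩, Subtype.ext ?_⟩
    rw [hψ _ y (mem_connectedComponentIn hy), U.2.eq_connectedComponentIn hx,
      connectedComponentIn_eq hyx]
  have hψbij : Function.Bijective ψ := ⟨hinj, hsurj⟩
  refine ⟨(Equiv.ofBijective ψ hψbij).symm, fun U w hw => ?_, Equiv.bijective _⟩
  have hwU : ψ ⟨_, isConnComp_connectedComponentIn hw.2⟩ = U := Subtype.ext <| by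
    rw [hψ _ w (mem_connectedComponentIn hw.2), U.2.eq_connectedComponentIn hw.1]
  rw [← hwU, Equiv.ofBijective_symm_apply_apply]
  exact mem_connectedComponentIn hw.2

end ConnectedComponents

namespace Signomial

variable {n : ℕ}

noncomputable def flow (v x : Fin n → ℝ) (t : ℝ) : Fin n → ℝ := fun i => t ^ v i * x i

/-- `t^{-a} f(t^v ⊙ x)` (see `sig_flow`). -/
noncomputable def rescaledSig (F : Finset (Fin n → ℝ)) (c : (Fin n → ℝ) → ℝ) (v : Fin n → ℝ)
    (a : ℝ) (x : Fin n → ℝ) (t : ℝ) : ℝ :=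
  ∑ μ ∈ F, c μ * (∏ i, x i ^ μ i) * t ^ (∑ i, v i * μ i - a)

def IsSeparatingHyperplane (F : Finset (Fin n → ℝ)) (c : (Fin n → ℝ) → ℝ) (v : Fin n → ℝ)
    (a : ℝ) : Prop :=
  sigNeg' F c ⊆ Hplus v a ∧ sigPos' F c ⊆ Hminus v a

variable {F : Finset (Fin n → ℝ)} {c : (Fin n → ℝ) → ℝ} {v x : Fin n → ℝ} {a t : ℝ}

lemma prod_rpow_pos (hx : ∀ i, 0 < x i) (μ : Fin n → ℝ) : 0 < ∏ i, x i ^ μ i :=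
  prod_pos fun i _ => Real.rpow_pos_of_pos (hx i) _

lemma flow_one (v x : Fin n → ℝ) : flow v x 1 = x := by
  funext i; simp [flow]

lemma continuous_flow (v : Fin n → ℝ) (t : ℝ) : Continuous fun x => flow v x t :=
  continuous_pi fun i => continuous_const.mul (continuous_apply i)

lemma continuousOn_flow (v x : Fin n → ℝ) : ContinuousOn (flow v x) (Set.Ioi 0) :=
  continuousOn_pi.2 fun _ => (continuousOn_id.rpow_const fun _ ht => Or.inl ht.ne').mul
    continuousOn_const

lemma prod_flow_rpow (hx : ∀ i, 0 < x i) (ht : 0 < t) (μ : Fin n → ℝ) :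
    ∏ i, flow v x t i ^ μ i = t ^ (∑ i, v i * μ i) * ∏ i, x i ^ μ i := by
  rw [Real.rpow_sum_of_pos ht, ← prod_mul_distrib]
  refine prod_congr rfl fun i _ => ?_
  rw [flow, Real.mul_rpow (Real.rpow_nonneg ht.le _) (hx i).le, ← Real.rpow_mul ht.le]

lemma sig_flow (hx : ∀ i, 0 < x i) (ht : 0 < t) :
    sig F c (flow v x t) = t ^ a * rescaledSig F c v a x t := by
  rw [sig, rescaledSig, mul_sum]
  refine sum_congr rfl fun μ _ => ?_
  rw [prod_flow_rpow hx ht, Real.rpow_sub ht]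
  field_simp

lemma rescaledSig_one : rescaledSig F c v a x 1 = sig F c x := by
  simp [rescaledSig, sig]

lemma flow_mem_negSet_iff (ht : 0 < t) :
    flow v x t ∈ negSet F c ↔ (∀ i, 0 < x i) ∧ rescaledSig F c v a x t < 0 := by
  have hta : 0 < t ^ a := Real.rpow_pos_of_pos ht a
  constructor
  · rintro ⟨hpos, hneg⟩
    have hx : ∀ i, 0 < x i := fun i =>
      pos_of_mul_pos_right (hpos i) (Real.rpow_pos_of_pos ht _).le
    rw [sig_flow hx ht] at hneg
    exact ⟨hx, neg_of_mul_neg_right hneg hta.le⟩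
  · rintro ⟨hx, hneg⟩
    refine ⟨fun i => mul_pos (Real.rpow_pos_of_pos ht _) (hx i), ?_⟩
    rw [sig_flow hx ht]
    exact mul_neg_of_pos_of_neg hta hneg

lemma isOpen_negSet (F : Finset (Fin n → ℝ)) (c : (Fin n → ℝ) → ℝ) : IsOpen (negSet F c) := by
  have horthant : IsOpen {x : Fin n → ℝ | ∀ i, 0 < x i} := by
    simpa [Set.pi] using isOpen_set_pi Set.finite_univ fun i _ => isOpen_Ioi (a := (0 : ℝ))
  have hsig : ContinuousOn (sig F c) {x | ∀ i, 0 < x i} :=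
    continuousOn_finsetSum _ fun _ _ => continuousOn_const.mul <|
      continuousOn_finsetProd _ fun i _ =>
        (continuous_apply i).continuousOn.rpow_const fun _ hx => Or.inl (hx i).ne'
  exact hsig.isOpen_inter_preimage horthant isOpen_Iio

namespace IsSeparatingHyperplane

lemma mono {R : Finset (Fin n → ℝ)} (h : IsSeparatingHyperplane F c v a) (hRF : R ⊆ F) :
    IsSeparatingHyperplane R c v a :=
  ⟨fun _ hμ => h.1 ⟨hRF hμ.1, hμ.2⟩, fun _ hμ => h.2 ⟨hRF hμ.1, hμ.2⟩⟩

/-- Every term of `rescaledSig` is antitone: negative coefficients carry exponents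
`v·μ - a ≥ 0`, positive ones exponents `≤ 0`. -/
lemma antitoneOn_rescaledSig (h : IsSeparatingHyperplane F c v a) (hx : ∀ i, 0 < x i) :
    AntitoneOn (rescaledSig F c v a x) (Set.Ioi 0) := by
  intro t₁ ht₁ t₂ _ h12
  refine sum_le_sum fun μ hμ => ?_
  have hm := prod_rpow_pos hx μ
  rcases lt_trichotomy (c μ) 0 with hcμ | hcμ | hcμ
  · have he : 0 ≤ ∑ i, v i * μ i - a := sub_nonneg.2 (h.1 ⟨hμ, hcμ⟩)
    exact mul_le_mul_of_nonpos_left (Real.rpow_le_rpow (le_of_lt ht₁) h12 he)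
      (mul_nonpos_of_nonpos_of_nonneg hcμ.le hm.le)
  · simp [hcμ]
  · have he : ∑ i, v i * μ i - a ≤ 0 := sub_nonpos.2 (h.2 ⟨hμ, hcμ⟩)
    exact mul_le_mul_of_nonneg_left (Real.rpow_le_rpow_of_nonpos ht₁ h12 he)
      (mul_nonneg hcμ.le hm.le)

lemma flow_mem_negSet_of_le (h : IsSeparatingHyperplane F c v a) {T T' : ℝ} (hT : 0 < T)
    (hTT' : T ≤ T') (hx : flow v x T ∈ negSet F c) : flow v x T' ∈ negSet F c := by
  have hT' : 0 < T' := hT.trans_le hTT'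
  obtain ⟨hpos, hneg⟩ := (flow_mem_negSet_iff (a := a) hT).1 hx
  exact (flow_mem_negSet_iff hT').2
    ⟨hpos, (h.antitoneOn_rescaledSig hpos hT hT' hTT').trans_lt hneg⟩

lemma flow_mem_connectedComponentIn (h : IsSeparatingHyperplane F c v a) (hx : x ∈ negSet F c)
    {T : ℝ} (hT : 1 ≤ T) : flow v x T ∈ connectedComponentIn (negSet F c) x := by
  have hsub : flow v x '' Set.Icc 1 T ⊆ negSet F c := by
    rintro _ ⟨t, ht, rfl⟩
    exact h.flow_mem_negSet_of_le one_pos ht.1 (by rwa [flow_one])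
  have hpre : IsPreconnected (flow v x '' Set.Icc 1 T) :=
    isPreconnected_Icc.image _ <|
      (continuousOn_flow v x).mono fun t ht => zero_lt_one.trans_le ht.1
  have h1 := hpre.subset_connectedComponentIn ⟨1, ⟨le_rfl, hT⟩, rfl⟩ hsub ⟨T, ⟨hT, le_rfl⟩, rfl⟩
  rwa [flow_one] at h1

end IsSeparatingHyperplane

lemma tendsto_rescaledSig_atTop (hF : ∀ μ ∈ F, ∑ i, v i * μ i < a) :
    Tendsto (rescaledSig F c v a x) atTop (𝓝 0) := by
  rw [← show ∑ μ ∈ F, (0 : ℝ) = 0 from sum_const_zero]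
  refine tendsto_finsetSum _ fun μ hμ => ?_
  have hexp : Tendsto (fun t : ℝ => t ^ (∑ i, v i * μ i - a)) atTop (𝓝 0) := by
    simpa using tendsto_rpow_neg_atTop (sub_pos.2 (hF μ hμ))
  simpa using hexp.const_mul (c μ * ∏ i, x i ^ μ i)

lemma negSet_subset_negSet {R S : Finset (Fin n → ℝ)} (hRS : R ⊆ S)
    (hpos : ∀ μ ∈ S \ R, 0 < c μ) : negSet S c ⊆ negSet R c := by
  rintro x ⟨hx, hneg⟩
  refine ⟨hx, lt_of_le_of_lt ?_ hneg⟩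
  rw [sig, sig, ← sum_sdiff hRS]
  exact le_add_of_nonneg_left <| sum_nonneg fun μ hμ =>
    (mul_pos (hpos μ hμ) (prod_rpow_pos hx μ)).le

section Restriction

variable {R S : Finset (Fin n → ℝ)} (hsep : IsSeparatingHyperplane S c v a) (hRS : R ⊆ S)
  (hlt : ∀ μ ∈ S \ R, ∑ i, v i * μ i < a)
include hsep hRS hlt

lemma exists_flow_mem_negSet (hx : x ∈ negSet R c) : ∃ T, 1 ≤ T ∧ flow v x T ∈ negSet S c := by
  have htail : ∀ᶠ t in atTop, rescaledSig (S \ R) c v a x t < -sig R c x :=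
    (tendsto_rescaledSig_atTop hlt).eventually_lt_const (neg_pos.2 hx.2)
  obtain ⟨T, hT, hT1⟩ := (htail.and (eventually_ge_atTop 1)).exists
  have hT0 : (0 : ℝ) < T := one_pos.trans_le hT1
  have hR : rescaledSig R c v a x T ≤ sig R c x := by
    rw [← rescaledSig_one (v := v) (a := a)]
    exact (hsep.mono hRS).antitoneOn_rescaledSig hx.1 (Set.mem_Ioi.2 one_pos) hT0 hT1
  refine ⟨T, hT1, (flow_mem_negSet_iff (a := a) hT0).2 ⟨hx.1, ?_⟩⟩
  rw [rescaledSig, ← sum_sdiff hRS]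
  change rescaledSig (S \ R) c v a x T + rescaledSig R c v a x T < 0
  linarith

lemma exists_flow_image_subset_negSet {K : Set (Fin n → ℝ)} (hK : IsCompact K)
    (hKR : K ⊆ negSet R c) : ∃ T, 1 ≤ T ∧ ∀ w ∈ K, flow v w T ∈ negSet S c := by
  let W : ℕ → Set (Fin n → ℝ) := fun k => (fun w => flow v w (k + 1)) ⁻¹' negSet S c
  have hW : Monotone W := fun k l hkl w hw =>
    hsep.flow_mem_negSet_of_le k.cast_add_one_pos (by gcongr) hw
  have hcover : K ⊆ ⋃ k, W k := by
    intro w hw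
    obtain ⟨T, hT1, hTS⟩ := exists_flow_mem_negSet hsep hRS hlt (hKR hw)
    obtain ⟨k, hk⟩ := exists_nat_ge T
    exact Set.mem_iUnion.2 ⟨k, hsep.flow_mem_negSet_of_le (one_pos.trans_le hT1) (by linarith) hTS⟩
  obtain ⟨k, hk⟩ := hK.elim_directed_cover W
    (fun k => (isOpen_negSet S c).preimage (continuous_flow v _)) hcover hW.directed_le
  exact ⟨k + 1, by simp, hk⟩

lemma mem_connectedComponentIn_negSet {x y : Fin n → ℝ} (hx : x ∈ negSet S c)
    (hy : y ∈ negSet S c) (hxy : y ∈ connectedComponentIn (negSet R c) x) :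
    y ∈ connectedComponentIn (negSet S c) x := by
  have hxR : x ∈ negSet R c := connectedComponentIn_nonempty_iff.1 ⟨y, hxy⟩
  have hpath : IsPathConnected (connectedComponentIn (negSet R c) x) :=
    ((isOpen_negSet R c).connectedComponentIn).isConnected_iff_isPathConnected.1
      (isConnected_connectedComponentIn_iff.2 hxR)
  obtain ⟨γ, hγ⟩ := hpath.joinedIn x (mem_connectedComponentIn hxR) y hxy
  obtain ⟨T, hT1, hTS⟩ := exists_flow_image_subset_negSet hsep hRS hlt
    (isCompact_range γ.continuous) (Set.range_subset_iff.2 fun s => connectedComponentIn_subset _ _ (hγ s))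
  have hγT : IsPreconnected (Set.range fun s => flow v (γ s) T) :=
    isPreconnected_range ((continuous_flow v T).comp γ.continuous)
  have hxy' : flow v y T ∈ connectedComponentIn (negSet S c) (flow v x T) :=
    hγT.subset_connectedComponentIn ⟨0, by simp⟩
      (Set.range_subset_iff.2 fun s => hTS _ ⟨s, rfl⟩) ⟨1, by simp⟩
  rw [connectedComponentIn_eq (hsep.flow_mem_connectedComponentIn hx hT1),
    connectedComponentIn_eq hxy',
    ← connectedComponentIn_eq (hsep.flow_mem_connectedComponentIn hy hT1)]
  exact mem_connectedComponentIn hy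

end Restriction

end Signomial

open Signomial in
theorem stmt_4_general (n : ℕ) (S : Finset (Fin n → ℝ)) (c : (Fin n → ℝ) → ℝ)
    (hc : ∀ μ ∈ S, c μ ≠ 0)
    (v : Fin n → ℝ) (a : ℝ)
    (hsepneg : sigNeg' S c ⊆ Hplus v a) (hseppos : sigPos' S c ⊆ Hminus v a)
    (R : Finset (Fin n → ℝ)) (hRS : R ⊆ S)
    (hRneg : sigNeg' S c ⊆ ↑R)
    (hRpos : Hyp v a ∩ sigPos' S c ⊆ ↑R) :
    ∃ φ : {U : Set (Fin n → ℝ) // IsConnComp (negSet R c) U} →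
          {V : Set (Fin n → ℝ) // IsConnComp (negSet S c) V},
      (∀ U, U.1 ∩ negSet S c ⊆ (φ U).1) ∧
      Function.Bijective φ ∧
      compCard (negSet R c) = compCard (negSet S c) := by
  have hsep : IsSeparatingHyperplane S c v a := ⟨hsepneg, hseppos⟩
  have htail : ∀ μ ∈ S \ R, 0 < c μ ∧ ∑ i, v i * μ i < a := by
    intro μ hμ
    obtain ⟨hμS, hμR⟩ := mem_sdiff.1 hμ
    have hpos : 0 < c μ :=
      (hc μ hμS).lt_or_gt.resolve_left fun hneg => hμR (hRneg ⟨hμS, hneg⟩)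
    exact ⟨hpos, (hseppos ⟨hμS, hpos⟩).lt_of_ne fun heq => hμR (hRpos ⟨heq, hμS, hpos⟩)⟩
  have hlt : ∀ μ ∈ S \ R, ∑ i, v i * μ i < a := fun μ hμ => (htail μ hμ).2
  obtain ⟨φ, hφ, hbij⟩ := exists_bijective_isConnComp
    (negSet_subset_negSet hRS fun μ hμ => (htail μ hμ).1)
    (fun x hx => by
      obtain ⟨T, hT1, hTS⟩ := exists_flow_mem_negSet hsep hRS hlt hx
      exact ⟨flow v x T, hTS, (hsep.mono hRS).flow_mem_connectedComponentIn hx hT1⟩)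
    (fun _ hx _ hy hxy => mem_connectedComponentIn_negSet hsep hRS hlt hx hy hxy)
  exact ⟨φ, hφ, hbij, Cardinal.mk_congr (Equiv.ofBijective φ hbij)⟩

/-- Proposition 2.4(ii). -/
theorem stmt_4 (n : ℕ) (S : Finset (Fin n → ℝ)) (c : (Fin n → ℝ) → ℝ)
    (hc : ∀ μ ∈ S, c μ ≠ 0)
    (v : Fin n → ℝ) (hv : v ≠ 0) (a : ℝ)
    (hsepneg : sigNeg' S c ⊆ Hplus v a) (hseppos : sigPos' S c ⊆ Hminus v a)
    (R : Finset (Fin n → ℝ)) (hRS : R ⊆ S)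
    (hRneg : sigNeg' S c ⊆ ↑R)
    (hRpos : Hyp v a ∩ sigPos' S c ⊆ ↑R) :
    ∃ φ : {U : Set (Fin n → ℝ) // IsConnComp (negSet R c) U} →
          {V : Set (Fin n → ℝ) // IsConnComp (negSet S c) V},
      (∀ U, U.1 ∩ negSet S c ⊆ (φ U).1) ∧
      Function.Bijective φ ∧
      compCard (negSet R c) = compCard (negSet S c) :=
  stmt_4_general n S c hc v a hsepneg hseppos R hRS hRneg hRpos
end

section
/- Let f : ℝ_{>0}^n → ℝ, f(x) = ∑_{μ ∈ σ(f)} c_μ x^μ be a signomial whose support has a separating hyperplane H_{v,a}, and let R ⊆ σ(f) be a subset with σ_-(f) ⊆ R and H_{v,a} ∩ σ_+(f) ⊆ R. Then for every x ∈ ℝ_{>0}^n with f|_R(x) < 0, one has f|_R(t^v ∗ x) < 0 for all t ≥ 1, and there exists t_0 > 1 such that f(t^v ∗ x) < 0 for all t ≥ t_0, where t^v ∗ x denotes the point with coordinates (t^{v_1} x_1, …, t^{v_n} x_n). -/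
open Finset

/-- `σ₊(f)`: the positive exponent vectors. -/
def sigmaPos {n : ℕ} (S : Finset (Fin n → ℝ)) (c : (Fin n → ℝ) → ℝ) : Set (Fin n → ℝ) :=
  {μ | μ ∈ S ∧ 0 < c μ}

/-- `σ₋(f)`: the negative exponent vectors. -/
def sigmaNeg {n : ℕ} (S : Finset (Fin n → ℝ)) (c : (Fin n → ℝ) → ℝ) : Set (Fin n → ℝ) :=
  {μ | μ ∈ S ∧ c μ < 0}

/-! Along the ray `t ↦ t^v ∗ x` the monomial `x^μ` is scaled by `t^{v·μ}`. Since `H_{v,a}`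
separates the support of `f|_R`, each of its terms satisfies `c_μ x^μ t^{v·μ} ≤ c_μ x^μ t^a` for
`t ≥ 1`, so `f|_R(t^v ∗ x) ≤ t^a f|_R(x)`. The monomials of `f` outside `R` are positive and lie
strictly below `H_{v,a}`, so their contribution is `o(t^a)`. -/

open Filter Asymptotics

lemma isLittleO_rpow_rpow_atTop {e a : ℝ} (h : e < a) :
    (fun t : ℝ => t ^ e) =o[atTop] fun t => t ^ a := by
  refine (isLittleO_iff_tendsto' ?_).2 ?_
  · filter_upwards [eventually_gt_atTop 0] with t ht hta
    exact absurd hta (Real.rpow_pos_of_pos ht a).ne'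
  · refine (tendsto_rpow_neg_atTop (sub_pos.2 h)).congr' ?_
    filter_upwards [eventually_gt_atTop 0] with t ht
    rw [← Real.rpow_sub ht, neg_sub]

lemma mul_rpow_le_mul_rpow {t e a b : ℝ} (ht : 1 ≤ t) (hneg : b < 0 → a ≤ e)
    (hpos : 0 < b → e ≤ a) : b * t ^ e ≤ b * t ^ a := by
  rcases lt_trichotomy b 0 with hb | rfl | hb
  · exact mul_le_mul_of_nonpos_left (Real.rpow_le_rpow_of_exponent_le ht (hneg hb)) hb.le
  · simp
  · exact mul_le_mul_of_nonneg_left (Real.rpow_le_rpow_of_exponent_le ht (hpos hb)) hb.le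

section Ray

variable {n : ℕ} (c : (Fin n → ℝ) → ℝ) {v x : Fin n → ℝ} {a t : ℝ}

lemma prod_rpow_ray (hx : ∀ i, 0 < x i) (ht : 0 < t) (μ : Fin n → ℝ) :
    ∏ i, (t ^ v i * x i) ^ μ i = t ^ (∑ i, v i * μ i) * ∏ i, x i ^ μ i := by
  rw [Real.rpow_sum_of_pos ht, ← prod_mul_distrib]
  refine prod_congr rfl fun i _ => ?_
  rw [Real.mul_rpow (Real.rpow_nonneg ht.le _) (hx i).le, ← Real.rpow_mul ht.le]

lemma sig_ray (F : Finset (Fin n → ℝ)) (hx : ∀ i, 0 < x i) (ht : 0 < t) :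
    sig F c (fun i => t ^ v i * x i) =
      ∑ μ ∈ F, c μ * (∏ i, x i ^ μ i) * t ^ (∑ i, v i * μ i) := by
  refine sum_congr rfl fun μ _ => ?_
  rw [prod_rpow_ray hx ht]
  ring

lemma sig_eq_add_sig_sdiff {S R : Finset (Fin n → ℝ)} (hRS : R ⊆ S) (y : Fin n → ℝ) :
    sig S c y = sig R c y + sig (S \ R) c y := by
  rw [sig, sig, sig, ← sum_sdiff hRS, add_comm]

lemma sig_ray_le_rpow_mul {F : Finset (Fin n → ℝ)} (hneg : sigmaNeg F c ⊆ Hplus v a)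
    (hpos : sigmaPos F c ⊆ Hminus v a) (hx : ∀ i, 0 < x i) (ht : 1 ≤ t) :
    sig F c (fun i => t ^ v i * x i) ≤ t ^ a * sig F c x := by
  rw [sig_ray c F hx (zero_lt_one.trans_le ht), mul_comm, sig, sum_mul]
  refine sum_le_sum fun μ hμ => ?_
  have hxμ : 0 ≤ ∏ i, x i ^ μ i := prod_nonneg fun i _ => (Real.rpow_pos_of_pos (hx i) _).le
  exact mul_rpow_le_mul_rpow ht (fun h => hneg ⟨hμ, neg_of_mul_neg_left h hxμ⟩)
    (fun h => hpos ⟨hμ, pos_of_mul_pos_left h hxμ⟩)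

lemma sig_ray_isLittleO {T : Finset (Fin n → ℝ)}
    (hT : ∀ μ ∈ T, c μ ≠ 0 → ∑ i, v i * μ i < a) (hx : ∀ i, 0 < x i) :
    (fun t => sig T c (fun i => t ^ v i * x i)) =o[atTop] fun t => t ^ a := by
  have hsum : (fun t : ℝ => ∑ μ ∈ T, c μ * (∏ i, x i ^ μ i) * t ^ (∑ i, v i * μ i))
      =o[atTop] fun t => t ^ a := by
    refine IsLittleO.fun_sum fun μ hμ => ?_
    by_cases hc : c μ = 0
    · simp [hc]
    · exact (isLittleO_rpow_rpow_atTop (hT μ hμ hc)).const_mul_left _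
  exact hsum.congr' ((eventually_gt_atTop 0).mono fun t ht => (sig_ray c T hx ht).symm)
    EventuallyEq.rfl

lemma eventually_sig_ray_neg {S R : Finset (Fin n → ℝ)} (hRS : R ⊆ S)
    (hneg : sigmaNeg R c ⊆ Hplus v a) (hpos : sigmaPos R c ⊆ Hminus v a)
    (htail : ∀ μ ∈ S \ R, c μ ≠ 0 → ∑ i, v i * μ i < a) (hx : ∀ i, 0 < x i)
    (hRx : sig R c x < 0) :
    ∀ᶠ t in atTop, sig S c (fun i => t ^ v i * x i) < 0 := by
  have hε : 0 < -sig R c x / 2 := by linarith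
  filter_upwards [(sig_ray_isLittleO c htail hx).bound hε, eventually_ge_atTop 1]
    with t hsmall ht
  have hta : 0 < t ^ a := Real.rpow_pos_of_pos (zero_lt_one.trans_le ht) a
  rw [Real.norm_eq_abs, Real.norm_of_nonneg hta.le] at hsmall
  rw [sig_eq_add_sig_sdiff c hRS]
  nlinarith [sig_ray_le_rpow_mul c hneg hpos hx ht, mul_neg_of_pos_of_neg hta hRx,
    le_abs_self (sig (S \ R) c fun i => t ^ v i * x i)]

end Ray

theorem stmt_5_general (n : ℕ) (S : Finset (Fin n → ℝ)) (c : (Fin n → ℝ) → ℝ)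
    (v : Fin n → ℝ) (a : ℝ)
    (hsepneg : sigmaNeg S c ⊆ Hplus v a) (hseppos : sigmaPos S c ⊆ Hminus v a)
    (R : Finset (Fin n → ℝ)) (hRS : R ⊆ S)
    (hRneg : sigmaNeg S c ⊆ ↑R)
    (hRpos : Hyp v a ∩ sigmaPos S c ⊆ ↑R) :
    ∀ x : Fin n → ℝ, (∀ i, 0 < x i) → sig R c x < 0 →
      (∀ t : ℝ, 1 ≤ t → sig R c (fun i => t ^ v i * x i) < 0) ∧
      (∃ t₀ : ℝ, 1 < t₀ ∧ ∀ t : ℝ, t₀ ≤ t → sig S c (fun i => t ^ v i * x i) < 0) := by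
  intro x hx hRx
  have hRsepneg : sigmaNeg R c ⊆ Hplus v a := fun μ hμ => hsepneg ⟨hRS hμ.1, hμ.2⟩
  have hRseppos : sigmaPos R c ⊆ Hminus v a := fun μ hμ => hseppos ⟨hRS hμ.1, hμ.2⟩
  have htail : ∀ μ ∈ S \ R, c μ ≠ 0 → ∑ i, v i * μ i < a := by
    intro μ hμ hcμ
    rw [Finset.mem_sdiff] at hμ
    have hpos : 0 < c μ := hcμ.lt_or_gt.resolve_left fun h => hμ.2 (hRneg ⟨hμ.1, h⟩)
    exact (hseppos ⟨hμ.1, hpos⟩).lt_of_ne fun h => hμ.2 (hRpos ⟨h, hμ.1, hpos⟩)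
  refine ⟨fun t ht => (sig_ray_le_rpow_mul c hRsepneg hRseppos hx ht).trans_lt
    (mul_neg_of_pos_of_neg (Real.rpow_pos_of_pos (zero_lt_one.trans_le ht) a) hRx), ?_⟩
  obtain ⟨t₀, ht₀⟩ := eventually_atTop.1
    ((eventually_sig_ray_neg c hRS hRsepneg hRseppos htail hx hRx).and (eventually_gt_atTop 1))
  exact ⟨t₀, (ht₀ t₀ le_rfl).2, fun t ht => (ht₀ t ht).1⟩

/-- The key path property behind Proposition 2.4: along the ray `t ↦ t^v ∗ x`, the
restriction stays negative for `t ≥ 1`, and `f` is eventually negative. -/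
theorem stmt_5 (n : ℕ) (S : Finset (Fin n → ℝ)) (c : (Fin n → ℝ) → ℝ)
    (hc : ∀ μ ∈ S, c μ ≠ 0)
    (v : Fin n → ℝ) (hv : v ≠ 0) (a : ℝ)
    (hsepneg : sigmaNeg S c ⊆ Hplus v a) (hseppos : sigmaPos S c ⊆ Hminus v a)
    (R : Finset (Fin n → ℝ)) (hRS : R ⊆ S)
    (hRneg : sigmaNeg S c ⊆ ↑R)
    (hRpos : Hyp v a ∩ sigmaPos S c ⊆ ↑R) :
    ∀ x : Fin n → ℝ, (∀ i, 0 < x i) → sig R c x < 0 →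
      (∀ t : ℝ, 1 ≤ t → sig R c (fun i => t ^ v i * x i) < 0) ∧
      (∃ t₀ : ℝ, 1 < t₀ ∧ ∀ t : ℝ, t₀ ≤ t → sig S c (fun i => t ^ v i * x i) < 0) :=
  stmt_5_general n S c v a hsepneg hseppos R hRS hRneg hRpos
end

section
/- Let f, g : ℝ_{>0}^n → ℝ be signomials. If there exist negative exponent vectors β₁ ∈ σ_-(f) and β₂ ∈ σ_-(g) such that Conv({β₁, β₂}) ∩ Conv(σ_+(f) ∪ σ_+(g)) = ∅, then f^{-1}(ℝ_{<0}) ∩ g^{-1}(ℝ_{<0}) ≠ ∅. -/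
open Finset

/-!
Strictly separate the segment `[β₁, β₂]` from `Conv(σ₊(f) ∪ σ₊(g))` by a hyperplane
`⟨v, ·⟩ = u`. Along the curve `t ↦ exp(t v)` every monomial `x^μ` becomes `exp(t ⟨v, μ⟩)`, so for
large `t` the negative terms at `β₁` and `β₂` outgrow all positive terms of `f` and of `g` at once.
-/

open Filter

lemma exists_sum_mul_lt_lt_of_disjoint {n : ℕ} {s t : Set (Fin n → ℝ)} (hs : Convex ℝ s)
    (hs' : IsCompact s) (ht : Convex ℝ t) (ht' : IsClosed t) (hst : Disjoint s t) :
    ∃ (v : Fin n → ℝ) (u : ℝ), (∀ μ ∈ s, ∑ i, v i * μ i < u) ∧ ∀ β ∈ t, u < ∑ i, v i * β i := by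
  obtain ⟨f, u, w, hfu, huw, hfw⟩ := geometric_hahn_banach_compact_closed hs hs' ht ht' hst
  have hf : ∀ μ, f μ = ∑ i, f (fun j => if i = j then 1 else 0) * μ i := fun μ => by
    simpa [mul_comm] using LinearMap.pi_apply_eq_sum_univ (f : (Fin n → ℝ) →ₗ[ℝ] ℝ) μ
  refine ⟨fun i => f (fun j => if i = j then 1 else 0), u, fun μ hμ => ?_, fun β hβ => ?_⟩
  · simpa only [← hf] using hfu μ hμ
  · simpa only [← hf] using huw.trans (hfw β hβ)

lemma prod_exp_mul_rpow {n : ℕ} (t : ℝ) (v μ : Fin n → ℝ) :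
    ∏ i, Real.exp (t * v i) ^ μ i = Real.exp (t * ∑ i, v i * μ i) := by
  simp_rw [← Real.exp_mul, ← Real.exp_sum, Finset.mul_sum, mul_assoc]

lemma sig_exp_mul {n : ℕ} (S : Finset (Fin n → ℝ)) (c : (Fin n → ℝ) → ℝ) (t : ℝ)
    (v : Fin n → ℝ) :
    sig S c (fun i => Real.exp (t * v i)) = ∑ μ ∈ S, c μ * Real.exp (t * ∑ i, v i * μ i) := by
  simp only [sig, prod_exp_mul_rpow]

section ExpSum

variable {ι : Type*} {s : Finset ι} {c e : ι → ℝ} {β : ι} {u : ℝ}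

lemma sum_mul_exp_le (hβ : β ∈ s) (hpos : ∀ i ∈ s, 0 < c i → e i ≤ u) {t : ℝ} (ht : 0 ≤ t) :
    ∑ i ∈ s, c i * Real.exp (t * e i)
      ≤ c β * Real.exp (t * e β) + (∑ i ∈ s, max (c i) 0) * Real.exp (t * u) := by
  classical
  have hterm : ∀ i ∈ s, c i * Real.exp (t * e i) ≤ max (c i) 0 * Real.exp (t * u) := by
    intro i hi
    rcases le_or_gt (c i) 0 with hc | hc
    · exact (mul_nonpos_of_nonpos_of_nonneg hc (Real.exp_pos _).le).trans
        (mul_nonneg (le_max_right _ _) (Real.exp_pos _).le)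
    · rw [max_eq_left hc.le]
      gcongr
      exact hpos i hi hc
  rw [← Finset.add_sum_erase s _ hβ, Finset.sum_mul]
  gcongr
  calc ∑ i ∈ s.erase β, c i * Real.exp (t * e i)
      ≤ ∑ i ∈ s.erase β, max (c i) 0 * Real.exp (t * u) :=
        Finset.sum_le_sum fun i hi => hterm i (Finset.mem_of_mem_erase hi)
    _ ≤ ∑ i ∈ s, max (c i) 0 * Real.exp (t * u) :=
        Finset.sum_le_sum_of_subset_of_nonneg (Finset.erase_subset _ _)
          fun i _ _ => mul_nonneg (le_max_right _ _) (Real.exp_pos _).le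

lemma eventually_mul_exp_add_mul_exp_neg (C : ℝ) {a b : ℝ} (ha : a < 0) (hu : u < b) :
    ∀ᶠ t in atTop, a * Real.exp (t * b) + C * Real.exp (t * u) < 0 := by
  have hlim : Tendsto (fun t => C + a * Real.exp (t * (b - u))) atTop atBot :=
    tendsto_atBot_add_const_left _ C <| Tendsto.const_mul_atTop_of_neg ha <|
      Real.tendsto_exp_atTop.comp (tendsto_id.atTop_mul_const (sub_pos.2 hu))
  filter_upwards [hlim.eventually_lt_atBot 0] with t ht
  have hsplit : a * Real.exp (t * b) + C * Real.exp (t * u)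
      = Real.exp (t * u) * (C + a * Real.exp (t * (b - u))) := by
    rw [mul_sub, Real.exp_sub]
    field_simp
    ring
  rw [hsplit]
  exact mul_neg_of_pos_of_neg (Real.exp_pos _) ht

lemma eventually_sum_mul_exp_neg (hβ : β ∈ s) (hcβ : c β < 0) (hu : u < e β)
    (hpos : ∀ i ∈ s, 0 < c i → e i ≤ u) :
    ∀ᶠ t in atTop, ∑ i ∈ s, c i * Real.exp (t * e i) < 0 := by
  filter_upwards [eventually_mul_exp_add_mul_exp_neg (∑ i ∈ s, max (c i) 0) hcβ hu,
    eventually_ge_atTop 0] with t ht ht₀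
  exact (sum_mul_exp_le hβ hpos ht₀).trans_lt ht

end ExpSum

lemma eventually_sig_exp_mul_neg {n : ℕ} {S : Finset (Fin n → ℝ)} {c : (Fin n → ℝ) → ℝ}
    {v β : Fin n → ℝ} {u : ℝ} (hβ : β ∈ sigNeg' S c)
    (hpos : ∀ μ ∈ sigPos' S c, ∑ i, v i * μ i ≤ u) (hu : u < ∑ i, v i * β i) :
    ∀ᶠ t in atTop, sig S c (fun i => Real.exp (t * v i)) < 0 := by
  simp only [sig_exp_mul]
  exact eventually_sum_mul_exp_neg hβ.1 hβ.2 hu fun μ hμ hc => hpos μ ⟨hμ, hc⟩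

lemma sigPos'_finite {n : ℕ} (S : Finset (Fin n → ℝ)) (c : (Fin n → ℝ) → ℝ) :
    (sigPos' S c).Finite :=
  S.finite_toSet.subset fun _ hμ => hμ.1

theorem stmt_8_general (n : ℕ) (S₁ S₂ : Finset (Fin n → ℝ)) (c₁ c₂ : (Fin n → ℝ) → ℝ)
    (β₁ β₂ : Fin n → ℝ) (hβ₁ : β₁ ∈ sigNeg' S₁ c₁) (hβ₂ : β₂ ∈ sigNeg' S₂ c₂)
    (hdisj : convexHull ℝ {β₁, β₂} ∩ convexHull ℝ (sigPos' S₁ c₁ ∪ sigPos' S₂ c₂) = ∅) :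
    (negSet S₁ c₁ ∩ negSet S₂ c₂).Nonempty := by
  set P := sigPos' S₁ c₁ ∪ sigPos' S₂ c₂
  have hPfin : P.Finite := (sigPos'_finite S₁ c₁).union (sigPos'_finite S₂ c₂)
  have hBfin : ({β₁, β₂} : Set (Fin n → ℝ)).Finite := Set.toFinite _
  obtain ⟨v, u, hP, hB⟩ := exists_sum_mul_lt_lt_of_disjoint (convex_convexHull ℝ P)
    (hPfin.isCompact_convexHull (𝕜 := ℝ)) (convex_convexHull ℝ _)
    (hBfin.isCompact_convexHull (𝕜 := ℝ)).isClosed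
    (Set.disjoint_iff_inter_eq_empty.2 (Set.inter_comm _ _ ▸ hdisj))
  have hPu : ∀ μ ∈ P, ∑ i, v i * μ i ≤ u := fun μ hμ => (hP μ (subset_convexHull ℝ P hμ)).le
  have hβu : ∀ β ∈ ({β₁, β₂} : Set (Fin n → ℝ)), u < ∑ i, v i * β i :=
    fun β hβ => hB β (subset_convexHull ℝ _ hβ)
  obtain ⟨t, h₁, h₂⟩ :=
    ((eventually_sig_exp_mul_neg hβ₁ (fun μ hμ => hPu μ (Or.inl hμ)) (hβu β₁ (by simp))).and
      (eventually_sig_exp_mul_neg hβ₂ (fun μ hμ => hPu μ (Or.inr hμ)) (hβu β₂ (by simp)))).exists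
  exact ⟨fun i => Real.exp (t * v i), ⟨fun _ => Real.exp_pos _, h₁⟩, ⟨fun _ => Real.exp_pos _, h₂⟩⟩

/-- Proposition 2.12. -/
theorem stmt_8 (n : ℕ) (S₁ S₂ : Finset (Fin n → ℝ)) (c₁ c₂ : (Fin n → ℝ) → ℝ)
    (hc₁ : ∀ μ ∈ S₁, c₁ μ ≠ 0) (hc₂ : ∀ μ ∈ S₂, c₂ μ ≠ 0)
    (β₁ β₂ : Fin n → ℝ) (hβ₁ : β₁ ∈ sigNeg' S₁ c₁) (hβ₂ : β₂ ∈ sigNeg' S₂ c₂)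
    (hdisj : convexHull ℝ {β₁, β₂} ∩ convexHull ℝ (sigPos' S₁ c₁ ∪ sigPos' S₂ c₂) = ∅) :
    (negSet S₁ c₁ ∩ negSet S₂ c₂).Nonempty :=
  stmt_8_general n S₁ S₂ c₁ c₂ β₁ β₂ hβ₁ hβ₂ hdisj
end

section
/- Let f : ℝ_{>0}^n → ℝ, f(x) = ∑_{μ ∈ σ(f)} c_μ x^μ be a signomial. If the Newton polytope N(f) has dimension at least 2 and f has exactly one positive exponent vector (i.e. #σ_+(f) = 1), then f^{-1}(ℝ_{<0}) is non-empty and connected. -/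
open Finset

/-!
In logarithmic coordinates `x = exp y`, the signomial with unique positive exponent `p` factors as
`f(exp y) = exp ⟨p, y⟩ * (c p - G y)` with `G y = ∑_{μ ≠ p} |c μ| exp ⟨μ - p, y⟩` convex, so
`f⁻¹(ℝ_{<0})` corresponds to the complement of the closed convex set `C = {G ≤ c p}`. A single
term of `G` already exceeds `c p` on a half-space `{⟨μ - p, y⟩ > t}`, and since `dim N(f) ≥ 2`
two of these half-spaces have independent normals, so they meet. By Hahn–Banach every point
outside `C` lies in an open half-space avoiding `C`, and such a half-space meets one of the two
(a half-space disjoint from both would have a normal proportional to both normals). Hence the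
complement of `C` is connected.
-/

open Real

section HalfSpaces

variable {E : Type*} [AddCommGroup E] [Module ℝ E]

theorem exists_lt_and_lt_of_not_ker_le {φ ℓ : E →ₗ[ℝ] ℝ}
    (h : ¬ LinearMap.ker φ ≤ LinearMap.ker ℓ) {u : ℝ} {y : E} (hy : u < φ y) (t : ℝ) :
    ∃ z, u < φ z ∧ t < ℓ z := by
  obtain ⟨d, hφd, hℓd⟩ := SetLike.not_le_iff_exists.mp h
  rw [LinearMap.mem_ker] at hφd hℓd
  refine ⟨y + ((t + 1 - ℓ y) / ℓ d) • d, ?_, ?_⟩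
  · simpa [hφd] using hy
  · simp [div_mul_cancel₀ _ hℓd]

theorem not_ker_le_or_not_ker_le {ℓ₁ ℓ₂ : E →ₗ[ℝ] ℝ} (hind : LinearIndependent ℝ ![ℓ₁, ℓ₂])
    (φ : E →ₗ[ℝ] ℝ) :
    ¬ LinearMap.ker φ ≤ LinearMap.ker ℓ₁ ∨ ¬ LinearMap.ker φ ≤ LinearMap.ker ℓ₂ := by
  by_contra! h
  have multiple_of_φ : ∀ ℓ : E →ₗ[ℝ] ℝ, LinearMap.ker φ ≤ LinearMap.ker ℓ → ∃ a : ℝ, a • φ = ℓ :=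
    fun ℓ hℓ => by
      simpa [Set.range_const, Submodule.mem_span_singleton] using
        mem_span_of_iInf_ker_le_ker (L := fun _ : Unit => φ) (K := ℓ) (by simpa using hℓ)
  obtain ⟨a, rfl⟩ := multiple_of_φ ℓ₁ h.1
  obtain ⟨b, rfl⟩ := multiple_of_φ ℓ₂ h.2
  obtain ⟨-, ha⟩ := LinearIndependent.pair_iff.mp hind b (-a) (by
    rw [smul_smul, smul_smul, ← add_smul, mul_comm, neg_mul, add_neg_cancel, zero_smul])
  exact hind.ne_zero 0 (by simp [neg_eq_zero.mp ha])

theorem exists_lt_and_lt_or_exists_lt_and_lt {ℓ₁ ℓ₂ : E →ₗ[ℝ] ℝ}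
    (hind : LinearIndependent ℝ ![ℓ₁, ℓ₂]) {φ : E →ₗ[ℝ] ℝ} {u : ℝ} {y : E} (hy : u < φ y)
    (t₁ t₂ : ℝ) : (∃ z, u < φ z ∧ t₁ < ℓ₁ z) ∨ (∃ z, u < φ z ∧ t₂ < ℓ₂ z) :=
  (not_ker_le_or_not_ker_le hind φ).imp (exists_lt_and_lt_of_not_ker_le · hy t₁)
    (exists_lt_and_lt_of_not_ker_le · hy t₂)

theorem exists_lt_and_lt_of_linearIndependent {ℓ₁ ℓ₂ : E →ₗ[ℝ] ℝ}
    (hind : LinearIndependent ℝ ![ℓ₁, ℓ₂]) (t₁ t₂ : ℝ) : ∃ z, t₁ < ℓ₁ z ∧ t₂ < ℓ₂ z := by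
  obtain ⟨y, hy⟩ : ∃ y, ℓ₁ y = t₁ + 1 := LinearMap.surjective (hind.ne_zero 0) _
  exact exists_lt_and_lt_of_not_ker_le
    ((not_ker_le_or_not_ker_le hind ℓ₁).resolve_left (not_not.mpr le_rfl)) (u := t₁) (y := y)
    (by rw [hy]; linarith) t₂

variable [TopologicalSpace E] [IsTopologicalAddGroup E] [ContinuousSMul ℝ E]
  [LocallyConvexSpace ℝ E]

theorem Convex.isConnected_compl_of_halfSpaces {C : Set E} (hconv : Convex ℝ C)
    (hclosed : IsClosed C) {ℓ₁ ℓ₂ : E →ₗ[ℝ] ℝ} (hind : LinearIndependent ℝ ![ℓ₁, ℓ₂])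
    {t₁ t₂ : ℝ} (h₁ : {x | t₁ < ℓ₁ x} ⊆ Cᶜ) (h₂ : {x | t₂ < ℓ₂ x} ⊆ Cᶜ) :
    IsConnected Cᶜ := by
  obtain ⟨x₀, hx₀⟩ := exists_lt_and_lt_of_linearIndependent hind t₁ t₂
  set K := {x | t₁ < ℓ₁ x} ∪ {x | t₂ < ℓ₂ x}
  have hK : IsPreconnected K :=
    (convex_halfSpace_gt ℓ₁.isLinear t₁).isPreconnected.union x₀ hx₀.1 hx₀.2
      (convex_halfSpace_gt ℓ₂.isLinear t₂).isPreconnected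
  refine ⟨⟨x₀, h₁ hx₀.1⟩, isPreconnected_of_forall x₀ fun y hy => ?_⟩
  obtain ⟨f, u, hfC, hfy⟩ := geometric_hahn_banach_closed_point hconv hclosed hy
  have hP : {x | u < f x} ⊆ Cᶜ := fun x hx hxC => (hfC x hxC).not_gt hx
  obtain ⟨z, hzP, hzK⟩ : ({x | u < f x} ∩ K).Nonempty := by
    rcases exists_lt_and_lt_or_exists_lt_and_lt hind (φ := f.toLinearMap) hfy t₁ t₂ with
      ⟨z, hz⟩ | ⟨z, hz⟩
    exacts [⟨z, hz.1, Or.inl hz.2⟩, ⟨z, hz.1, Or.inr hz.2⟩]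
  exact ⟨{x | u < f x} ∪ K, Set.union_subset hP (Set.union_subset h₁ h₂), Or.inr (Or.inl hx₀.1),
    Or.inl hfy, (convex_halfSpace_gt f.isLinear u).isPreconnected.union z hzP hzK hK⟩

end HalfSpaces

theorem convexOn_sum_mul_exp {E ι : Type*} [AddCommGroup E] [Module ℝ E] (t : Finset ι)
    {a : ι → ℝ} (ha : ∀ i ∈ t, 0 ≤ a i) (ℓ : ι → E →ₗ[ℝ] ℝ) :
    ConvexOn ℝ Set.univ fun y => ∑ i ∈ t, a i * exp (ℓ i y) := by
  have : ConvexOn ℝ Set.univ (∑ i ∈ t, fun y => a i * exp (ℓ i y)) :=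
    Finset.sum_induction _ (ConvexOn ℝ Set.univ) (fun _ _ => ConvexOn.add)
      (convexOn_const 0 convex_univ) fun i hi => (convexOn_exp.comp_linearMap (ℓ i)).smul (ha i hi)
  simpa only [Finset.sum_fn] using this

theorem lt_sum_mul_exp_of_log_div_lt {ι : Type*} {t : Finset ι} {a x : ι → ℝ}
    (ha : ∀ j ∈ t, 0 ≤ a j) {i : ι} (hi : i ∈ t) (hai : 0 < a i) {r : ℝ} (hr : 0 < r)
    (hx : log (r / a i) < x i) : r < ∑ j ∈ t, a j * exp (x j) :=
  calc r < a i * exp (x i) := by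
        rwa [← div_lt_iff₀' hai, ← log_lt_iff_lt_exp (div_pos hr hai)]
    _ ≤ ∑ j ∈ t, a j * exp (x j) :=
        Finset.single_le_sum (f := fun j => a j * exp (x j))
          (fun j hj => mul_nonneg (ha j hj) (exp_pos _).le) hi

theorem vectorSpan_convexHull {E : Type*} [AddCommGroup E] [Module ℝ E] (s : Set E) :
    vectorSpan ℝ (convexHull ℝ s) = vectorSpan ℝ s := by
  rw [← direction_affineSpan, ← direction_affineSpan, affineSpan_convexHull]
theorem exists_linearIndependent_pair_of_one_lt_finrank_span {K V : Type*} [Field K]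
    [AddCommGroup V] [Module K V] {t : Set V} (h : 1 < Module.finrank K (Submodule.span K t)) :
    ∃ u ∈ t, ∃ v ∈ t, LinearIndependent K ![u, v] := by
  obtain ⟨b, hbt, hspan, hb⟩ := exists_linearIndependent K t
  have : Nontrivial b := by
    rw [← Cardinal.one_lt_iff_nontrivial, ← rank_span_set hb, hspan]
    exact Module.one_lt_rank_of_one_lt_finrank h
  obtain ⟨⟨u, hu⟩, ⟨v, hv⟩, huv⟩ := exists_pair_ne b
  refine ⟨u, hbt hu, v, hbt hv, LinearIndependent.pair_iff.mpr ?_⟩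
  exact (LinearIndepOn.pair_iff id fun e => huv (Subtype.ext e)).mp
    ((show LinearIndepOn K id b from hb).mono
      (Set.insert_subset hu (Set.singleton_subset_iff.mpr hv)))

theorem exists_linearIndependent_pair_sub {K V : Type*} [Field K] [AddCommGroup V] [Module K V]
    {s : Set V} {p : V} (hp : p ∈ s) (h : 1 < Module.finrank K (vectorSpan K s)) :
    ∃ μ ∈ s, ∃ ν ∈ s, LinearIndependent K ![μ - p, ν - p] := by
  rw [vectorSpan_eq_span_vsub_set_right K hp] at h
  obtain ⟨_, ⟨μ, hμ, rfl⟩, _, ⟨ν, hν, rfl⟩, hind⟩ :=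
    exists_linearIndependent_pair_of_one_lt_finrank_span h
  exact ⟨μ, hμ, ν, hν, hind⟩

theorem LinearIndependent.map_pair {K V W : Type*} [Field K] [AddCommGroup V] [Module K V]
    [AddCommGroup W] [Module K W] {u v : V} (h : LinearIndependent K ![u, v]) {f : V →ₗ[K] W}
    (hf : Function.Injective f) : LinearIndependent K ![f u, f v] :=
  LinearIndependent.pair_iff.mpr fun s t hst =>
    LinearIndependent.pair_iff.mp h s t (hf (by rwa [map_add, map_smul, map_smul, map_zero]))

variable {n : ℕ}

theorem sig_exp (S : Finset (Fin n → ℝ)) (c : (Fin n → ℝ) → ℝ) (y : Fin n → ℝ) :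
    sig S c (fun i => exp (y i)) = ∑ μ ∈ S, c μ * exp (μ ⬝ᵥ y) := by
  refine Finset.sum_congr rfl fun μ _ => congrArg (c μ * ·) ?_
  simp_rw [rpow_def_of_pos (exp_pos _), log_exp, ← exp_sum, dotProduct, mul_comm]

theorem sig_exp_eq_mul {S : Finset (Fin n → ℝ)} {p : Fin n → ℝ} (hp : p ∈ S)
    (c : (Fin n → ℝ) → ℝ) (y : Fin n → ℝ) :
    sig S c (fun i => exp (y i)) =
      exp (p ⬝ᵥ y) * (c p - ∑ μ ∈ S.erase p, -c μ * exp ((μ - p) ⬝ᵥ y)) := by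
  rw [sig_exp, ← Finset.add_sum_erase S _ hp, mul_sub, Finset.mul_sum, sub_eq_add_neg,
    ← Finset.sum_neg_distrib]
  refine congrArg₂ (· + ·) (mul_comm _ _) (Finset.sum_congr rfl fun μ _ => ?_)
  rw [sub_dotProduct, exp_sub]
  field_simp

theorem sig_exp_neg_iff {S : Finset (Fin n → ℝ)} {p : Fin n → ℝ} (hp : p ∈ S)
    (c : (Fin n → ℝ) → ℝ) (y : Fin n → ℝ) :
    sig S c (fun i => exp (y i)) < 0 ↔ c p < ∑ μ ∈ S.erase p, -c μ * exp ((μ - p) ⬝ᵥ y) := by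
  rw [sig_exp_eq_mul hp, ← mul_zero (exp (p ⬝ᵥ y)), mul_lt_mul_iff_of_pos_left (exp_pos _),
    sub_neg]

theorem negSet_eq_image_exp (S : Finset (Fin n → ℝ)) (c : (Fin n → ℝ) → ℝ) :
    negSet S c =
      (fun y i => exp (y i)) '' {y : Fin n → ℝ | sig S c (fun i => exp (y i)) < 0} := by
  ext x
  constructor
  · rintro ⟨hx, hfx⟩
    have hexp : (fun i => exp (log (x i))) = x := funext fun i => exp_log (hx i)
    exact ⟨fun i => log (x i), show sig S c _ < 0 by rwa [hexp], hexp⟩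
  · rintro ⟨y, hy, rfl⟩
    exact ⟨fun i => exp_pos _, hy⟩

theorem coeff_neg_of_sigPos'_eq_singleton {S : Finset (Fin n → ℝ)} {c : (Fin n → ℝ) → ℝ}
    (hc : ∀ μ ∈ S, c μ ≠ 0) {p : Fin n → ℝ} (hp : sigPos' S c = {p}) :
    ∀ μ ∈ S.erase p, c μ < 0 := by
  intro μ hμ
  obtain ⟨hμp, hμS⟩ := Finset.mem_erase.mp hμ
  refine (hc μ hμS).lt_or_gt.resolve_right fun hcμ => hμp ?_
  exact (hp ▸ ⟨hμS, hcμ⟩ : μ ∈ ({p} : Set _))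

/-- Corollary 2.16: if the Newton polytope has dimension at least `2` and `f` has exactly
one positive exponent vector, then `f⁻¹(ℝ_{<0})` is non-empty and connected. -/
theorem stmt_10 (n : ℕ) (S : Finset (Fin n → ℝ)) (c : (Fin n → ℝ) → ℝ)
    (hc : ∀ μ ∈ S, c μ ≠ 0)
    (hdim : 2 ≤ Module.finrank ℝ
      ↥(vectorSpan ℝ (convexHull ℝ (↑S : Set (Fin n → ℝ)))))
    (hpos : (sigPos' S c).ncard = 1) :
    IsConnected (negSet S c) := by
  obtain ⟨p, hp⟩ := Set.ncard_eq_one.mp hpos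
  obtain ⟨hpS, hcp⟩ : p ∈ sigPos' S c := hp ▸ rfl
  have hneg : ∀ μ ∈ S.erase p, 0 < -c μ :=
    fun μ hμ => neg_pos.mpr (coeff_neg_of_sigPos'_eq_singleton hc hp μ hμ)
  rw [vectorSpan_convexHull] at hdim
  obtain ⟨μ₁, hμ₁, μ₂, hμ₂, hind⟩ := exists_linearIndependent_pair_sub hpS hdim
  set ℓ := fun μ => dotProductEquiv ℝ (Fin n) (μ - p)
  set G : (Fin n → ℝ) → ℝ := fun y => ∑ μ ∈ S.erase p, -c μ * exp (ℓ μ y)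
  have hhalf : ∀ μ ∈ S.erase p, {y | log (c p / -c μ) < ℓ μ y} ⊆ {y | G y ≤ c p}ᶜ :=
    fun μ hμ y hy => not_le.mpr <|
      lt_sum_mul_exp_of_log_div_lt (fun ν hν => (hneg ν hν).le) hμ (hneg μ hμ) hcp hy
  have hC : IsConnected {y | G y ≤ c p}ᶜ :=
    Convex.isConnected_compl_of_halfSpaces
      (by simpa only [Set.sep_univ] using
        (convexOn_sum_mul_exp _ (fun μ hμ => (hneg μ hμ).le) ℓ).convex_le (c p))
      (isClosed_le (by fun_prop) continuous_const)
      (hind.map_pair (dotProductEquiv ℝ (Fin n)).injective)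
      (hhalf μ₁ (Finset.mem_erase.mpr ⟨sub_ne_zero.mp (hind.ne_zero 0), hμ₁⟩))
      (hhalf μ₂ (Finset.mem_erase.mpr ⟨sub_ne_zero.mp (hind.ne_zero 1), hμ₂⟩))
  rw [negSet_eq_image_exp]
  convert hC.image _ (continuous_pi fun i => (continuous_apply i).rexp).continuousOn
  ext y
  exact (sig_exp_neg_iff hpS c y).trans not_le.symm
end
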